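/- arXiv:2601.09074 — 2 statements merged into one kernel-verified Lean document; each statement's English description precedes it below -/
import Mathlib

section
/- For every real number r > 1 there exist positive constants b_r and B_r such that for every natural number N, b_r^r (2N+1)^{r-1} ≤ ∫_{-π}^{π} |D_N(s)|^r ds ≤ B_r^r (2N+1)^{r-1}, where D_N(t) = Σ_{|l| ≤ N} e^{i l t} is the Dirichlet kernel. -/
/-!
Write `M = 2N + 1`. Factoring `D_N(t) = e^{-iNt} ∑_{k < M} e^{ikt}` as a geometric sum gives
`|D_N| ≤ M` and, since `|e^{it} - 1| = 2 |sin (t/2)| ≥ 2t/π`, also `|D_N(t)| ≤ π / t` on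
`(0, π]`. For `|t| ≤ 1/M` every summand `e^{ilt}` has real part at least `cos (1/2)`, so
`|D_N(t)| ≥ M cos (1/2)`. As `|D_N|` is even, it suffices to integrate over `[0, π]`: the piece
`[0, 1/M]` has length `1/M` and carries values of size `M`, while on `[1/M, π]` the bound
`(π/s)^r` integrates to at most `π^r M^{r-1} / (r - 1)` because `r > 1`.
-/

open Real MeasureTheory

/-- The Dirichlet kernel with `2N+1` harmonics. -/
noncomputable def dirichlet (N : ℕ) (t : ℝ) : ℂ :=
  ∑ l ∈ Finset.Icc (-(N : ℤ)) (N : ℤ), Complex.exp (Complex.I * l * t)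

open Complex (I)

lemma dirichlet_eq_exp_mul_geom_sum (N : ℕ) (t : ℝ) :
    dirichlet N t =
      Complex.exp (-(I * N * t)) * ∑ k ∈ Finset.range (2 * N + 1), Complex.exp (I * t) ^ k := by
  have hcard : ((N : ℤ) + 1 - -(N : ℤ)).toNat = 2 * N + 1 := by omega
  rw [dirichlet, Int.Icc_eq_finset_map, Finset.sum_map, hcard, Finset.mul_sum]
  refine Finset.sum_congr rfl fun k _ => ?_
  rw [← Complex.exp_nat_mul, ← Complex.exp_add]
  simp only [Function.Embedding.trans_apply, Nat.castEmbedding_apply, addLeftEmbedding_apply]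
  push_cast
  ring_nf

lemma continuous_dirichlet (N : ℕ) : Continuous (dirichlet N) :=
  continuous_finsetSum _ fun _ _ => by fun_prop

lemma norm_dirichlet_neg (N : ℕ) (t : ℝ) : ‖dirichlet N (-t)‖ = ‖dirichlet N t‖ := by
  rw [← Complex.norm_conj (dirichlet N t), dirichlet, dirichlet, map_sum]
  congr 1
  refine Finset.sum_congr rfl fun l _ => ?_
  rw [← Complex.exp_conj]
  simp only [map_mul, Complex.conj_I, map_intCast, Complex.conj_ofReal, Complex.ofReal_neg]
  ring_nf

lemma norm_exp_neg_I_mul_nat_mul (N : ℕ) (t : ℝ) :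
    ‖Complex.exp (-(Complex.I * N * t))‖ = 1 := by
  simp [Complex.norm_exp]

lemma norm_dirichlet_le (N : ℕ) (t : ℝ) : ‖dirichlet N t‖ ≤ 2 * N + 1 := by
  rw [dirichlet_eq_exp_mul_geom_sum, norm_mul, norm_exp_neg_I_mul_nat_mul, one_mul]
  refine (norm_sum_le _ _).trans ?_
  simp [Complex.norm_exp_I_mul_ofReal]

lemma norm_dirichlet_le_pi_div (N : ℕ) {t : ℝ} (ht : 0 < t) (htπ : t ≤ π) :
    ‖dirichlet N t‖ ≤ π / t := by
  have hfactor : dirichlet N t * (Complex.exp (I * t) - 1) =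
      Complex.exp (-(I * N * t)) * (Complex.exp (I * t) ^ (2 * N + 1) - 1) := by
    rw [dirichlet_eq_exp_mul_geom_sum, mul_assoc, geom_sum_mul]
  have hnum : ‖dirichlet N t‖ * ‖Complex.exp (I * t) - 1‖ ≤ 2 := by
    rw [← norm_mul, hfactor, norm_mul, norm_exp_neg_I_mul_nat_mul, one_mul]
    refine (norm_sub_le _ _).trans ?_
    rw [norm_pow, Complex.norm_exp_I_mul_ofReal]
    norm_num
  have hden : 2 * t / π ≤ ‖Complex.exp (I * t) - 1‖ := by
    rw [Complex.norm_exp_I_mul_ofReal_sub_one, Real.norm_eq_abs, abs_of_nonneg]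
    · have := mul_le_sin (x := t / 2) (by linarith) (by linarith)
      calc 2 * t / π = 2 * (2 / π * (t / 2)) := by ring
        _ ≤ 2 * sin (t / 2) := by linarith
    · nlinarith [sin_nonneg_of_nonneg_of_le_pi (x := t / 2) (by linarith) (by linarith)]
  have hprod := (mul_le_mul_of_nonneg_left hden (norm_nonneg (dirichlet N t))).trans hnum
  rw [le_div_iff₀ ht]
  calc ‖dirichlet N t‖ * t = π / 2 * (‖dirichlet N t‖ * (2 * t / π)) := by
        field_simp
    _ ≤ π / 2 * 2 := by gcongr
    _ = π := by ring

lemma mul_cos_half_le_norm_dirichlet (N : ℕ) {t : ℝ} (ht : |t| ≤ (2 * N + 1 : ℝ)⁻¹) :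
    cos (1 / 2) * (2 * N + 1) ≤ ‖dirichlet N t‖ := by
  have hM : (0 : ℝ) < 2 * N + 1 := by positivity
  have hcos : ∀ l ∈ Finset.Icc (-(N : ℤ)) N, cos (1 / 2) ≤ cos (l * t) := by
    intro l hl
    have hl' : |(l : ℝ)| ≤ N := by
      rw [Finset.mem_Icc] at hl
      rw [abs_le]; exact ⟨by exact_mod_cast hl.1, by exact_mod_cast hl.2⟩
    have hlt : |(l : ℝ) * t| ≤ 1 / 2 := by
      rw [abs_mul]
      calc |(l : ℝ)| * |t| ≤ N * (2 * N + 1 : ℝ)⁻¹ := by gcongr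
        _ ≤ 1 / 2 := by rw [← div_eq_mul_inv, div_le_div_iff₀ hM two_pos]; linarith
    rw [← cos_abs ((l : ℝ) * t)]
    exact cos_le_cos_of_nonneg_of_le_pi (abs_nonneg _) (by linarith [pi_gt_three]) hlt
  have hre : (dirichlet N t).re = ∑ l ∈ Finset.Icc (-(N : ℤ)) N, cos (l * t) := by
    rw [dirichlet, Complex.re_sum]
    refine Finset.sum_congr rfl fun l _ => ?_
    rw [← Complex.exp_ofReal_mul_I_re]
    push_cast
    ring_nf
  have hcard : ((N : ℤ) + 1 - -(N : ℤ)).toNat = 2 * N + 1 := by omega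
  have := Finset.card_nsmul_le_sum _ _ _ hcos
  rw [Int.card_Icc, hcard, nsmul_eq_mul] at this
  push_cast at this
  rw [mul_comm]
  exact this.trans (hre ▸ Complex.re_le_norm _)

open Set

lemma Function.Even.intervalIntegral_neg_eq_two_mul {f : ℝ → ℝ} (hf : Function.Even f)
    (a : ℝ) (hfi : IntervalIntegrable f volume (-a) a) :
    ∫ x in -a..a, f x = 2 * ∫ x in 0..a, f x := by
  have h0 : (0 : ℝ) ∈ uIcc (-a) a := by
    rw [mem_uIcc]
    rcases le_total 0 a with ha | ha
    · exact Or.inl ⟨by linarith, ha⟩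
    · exact Or.inr ⟨ha, by linarith⟩
  have hneg : ∫ x in -a..0, f x = ∫ x in 0..a, f x := by
    simpa [hf _] using (intervalIntegral.integral_comp_neg (a := 0) (b := a) f).symm
  rw [← intervalIntegral.integral_add_adjacent_intervals (hfi.mono_set (uIcc_subset_uIcc_left h0))
    (hfi.mono_set (uIcc_subset_uIcc_right h0)), hneg, two_mul]

lemma integral_rpow_neg_le {r a b : ℝ} (hr : 1 < r) (ha : 0 < a) (hab : a ≤ b) :
    ∫ s in a..b, s ^ (-r) ≤ a ^ (1 - r) / (r - 1) := by
  have h0 : (0 : ℝ) ∉ uIcc a b := by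
    rw [uIcc_of_le hab]; exact fun h => ha.not_ge h.1
  rw [integral_rpow (Or.inr ⟨by linarith, h0⟩), neg_add_eq_sub,
    show (1 - r) = -(r - 1) by ring, div_neg, ← neg_div, neg_sub]
  have : 0 ≤ b ^ (-(r - 1)) := rpow_nonneg (ha.le.trans hab) _
  gcongr
  linarith

section RpowIntegral

variable {f : ℝ → ℝ} {a M r : ℝ}

lemma le_integral_rpow_of_mul_le {c : ℝ} (hr : 0 ≤ r) (hc : 0 ≤ c) (hM : 0 < M)
    (hMa : M⁻¹ ≤ a) (hf0 : ∀ s ∈ Icc 0 a, 0 ≤ f s) (hfc : ∀ s ∈ Icc 0 M⁻¹, c * M ≤ f s)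
    (hfi : IntervalIntegrable (fun s => f s ^ r) volume 0 a) :
    c ^ r * M ^ (r - 1) ≤ ∫ s in 0..a, f s ^ r := by
  have hδ : 0 ≤ M⁻¹ := inv_nonneg.2 hM.le
  calc c ^ r * M ^ (r - 1) = ∫ _ in 0..M⁻¹, (c * M) ^ r := by
        rw [intervalIntegral.integral_const, sub_zero, smul_eq_mul, mul_rpow hc hM.le,
          rpow_sub_one hM.ne']
        field_simp
    _ ≤ ∫ s in 0..M⁻¹, f s ^ r := by
        have hsub : uIcc 0 M⁻¹ ⊆ uIcc 0 a := by
          rw [uIcc_of_le hδ, uIcc_of_le (hδ.trans hMa)]; exact Icc_subset_Icc_right hMa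
        exact intervalIntegral.integral_mono_on hδ intervalIntegrable_const (hfi.mono_set hsub)
          fun s hs => rpow_le_rpow (by positivity) (hfc s hs) hr
    _ ≤ ∫ s in 0..a, f s ^ r :=
        intervalIntegral.integral_mono_interval le_rfl hδ hMa
          ((ae_restrict_mem measurableSet_Ioc).mono fun s hs =>
            rpow_nonneg (hf0 s (Ioc_subset_Icc_self hs)) r) hfi

lemma integral_rpow_le_of_le_of_le_div {A : ℝ} (hr : 1 < r) (hA : 0 ≤ A) (hM : 0 < M)
    (hMa : M⁻¹ ≤ a) (hf0 : ∀ s ∈ Icc 0 a, 0 ≤ f s) (hfM : ∀ s ∈ Icc 0 a, f s ≤ M)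
    (hfA : ∀ s ∈ Ioc 0 a, f s ≤ A / s)
    (hfi : IntervalIntegrable (fun s => f s ^ r) volume 0 a) :
    ∫ s in 0..a, f s ^ r ≤ (1 + A ^ r / (r - 1)) * M ^ (r - 1) := by
  have hδ : 0 < M⁻¹ := inv_pos.2 hM
  have hsub₁ : uIcc 0 M⁻¹ ⊆ uIcc 0 a := by
    rw [uIcc_of_le hδ.le, uIcc_of_le (hδ.le.trans hMa)]; exact Icc_subset_Icc_right hMa
  have hsub₂ : uIcc M⁻¹ a ⊆ uIcc 0 a := by
    rw [uIcc_of_le hMa, uIcc_of_le (hδ.le.trans hMa)]; exact Icc_subset_Icc_left hδ.le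
  have hIcc₁ : Icc 0 M⁻¹ ⊆ Icc 0 a := Icc_subset_Icc_right hMa
  have hnear : ∫ s in 0..M⁻¹, f s ^ r ≤ M ^ (r - 1) := by
    calc ∫ s in 0..M⁻¹, f s ^ r ≤ ∫ _ in 0..M⁻¹, M ^ r :=
          intervalIntegral.integral_mono_on hδ.le (hfi.mono_set hsub₁) intervalIntegrable_const
            fun s hs => rpow_le_rpow (hf0 s (hIcc₁ hs)) (hfM s (hIcc₁ hs)) (by linarith)
      _ = M ^ (r - 1) := by
          rw [intervalIntegral.integral_const, sub_zero, smul_eq_mul, rpow_sub_one hM.ne']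
          field_simp
  have hfar : ∫ s in M⁻¹..a, f s ^ r ≤ A ^ r / (r - 1) * M ^ (r - 1) := by
    have h0 : (0 : ℝ) ∉ uIcc M⁻¹ a := by
      rw [uIcc_of_le hMa]; exact fun h => hδ.not_ge h.1
    calc ∫ s in M⁻¹..a, f s ^ r ≤ ∫ s in M⁻¹..a, A ^ r * s ^ (-r) := by
          refine intervalIntegral.integral_mono_on hMa (hfi.mono_set hsub₂)
            ((intervalIntegral.intervalIntegrable_rpow (Or.inr h0)).const_mul _) fun s hs => ?_
          have hs0 : 0 < s := hδ.trans_le hs.1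
          rw [rpow_neg hs0.le, ← div_eq_mul_inv, ← div_rpow hA hs0.le]
          exact rpow_le_rpow (hf0 s ⟨hs0.le, hs.2⟩) (hfA s ⟨hs0, hs.2⟩) (by linarith)
      _ ≤ A ^ r * ((M⁻¹) ^ (1 - r) / (r - 1)) := by
          rw [intervalIntegral.integral_const_mul]
          gcongr
          exact integral_rpow_neg_le hr hδ hMa
      _ = A ^ r / (r - 1) * M ^ (r - 1) := by
          rw [inv_rpow hM.le, ← rpow_neg hM.le, neg_sub]
          ring
  rw [← intervalIntegral.integral_add_adjacent_intervals (hfi.mono_set hsub₁)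
    (hfi.mono_set hsub₂)]
  linarith

end RpowIntegral

theorem stmt0 (r : ℝ) (hr : 1 < r) :
    ∃ b B : ℝ, 0 < b ∧ 0 < B ∧ ∀ N : ℕ,
      (b ^ r * (2 * (N : ℝ) + 1) ^ (r - 1) ≤ ∫ s in (-π)..π, ‖dirichlet N s‖ ^ r) ∧
      (∫ s in (-π)..π, ‖dirichlet N s‖ ^ r) ≤ B ^ r * (2 * (N : ℝ) + 1) ^ (r - 1) := by
  have hcos : 0 < cos (1 / 2) :=
    cos_pos_of_mem_Ioo ⟨by linarith [pi_pos], by linarith [pi_gt_three]⟩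
  have hC : 0 < 2 * (1 + π ^ r / (r - 1)) := by
    have : 0 < r - 1 := by linarith
    positivity
  refine ⟨cos (1 / 2), (2 * (1 + π ^ r / (r - 1))) ^ r⁻¹, hcos, by positivity, fun N => ?_⟩
  have hM : (0 : ℝ) < 2 * N + 1 := by positivity
  have hMπ : (2 * N + 1 : ℝ)⁻¹ ≤ π :=
    (inv_le_one_of_one_le₀ (by linarith [N.cast_nonneg (α := ℝ)])).trans
      (by linarith [pi_gt_three])
  have hcont : Continuous fun s => ‖dirichlet N s‖ ^ r :=
    (continuous_dirichlet N).norm.rpow_const fun _ => Or.inr (by linarith)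
  have hsymm :
      ∫ s in (-π)..π, ‖dirichlet N s‖ ^ r = 2 * ∫ s in 0..π, ‖dirichlet N s‖ ^ r :=
    Function.Even.intervalIntegral_neg_eq_two_mul (fun s => by simp only [norm_dirichlet_neg]) π
      (hcont.intervalIntegrable _ _)
  have hlower := le_integral_rpow_of_mul_le (by linarith) hcos.le hM hMπ
    (fun s _ => norm_nonneg _)
    (fun s hs => mul_cos_half_le_norm_dirichlet N ((abs_of_nonneg hs.1).trans_le hs.2))
    (hcont.intervalIntegrable 0 π)
  have hupper := integral_rpow_le_of_le_of_le_div hr pi_pos.le hM hMπ (fun s _ => norm_nonneg _)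
    (fun s _ => norm_dirichlet_le N s) (fun s hs => norm_dirichlet_le_pi_div N hs.1 hs.2)
    (hcont.intervalIntegrable 0 π)
  have hpow : 0 ≤ cos (1 / 2) ^ r * (2 * N + 1 : ℝ) ^ (r - 1) := by positivity
  rw [hsymm, rpow_inv_rpow hC.le (by linarith), mul_assoc]
  exact ⟨by linarith, by linarith⟩
end

section
/- Let X = {X_s}_{s ∈ [-π,π]} be a càdlàg process and τ a random time taking values in (-π, π], independent of X. Then for every κ > 1, E[|X_{τ-}|^κ] ≤ sup_{s ∈ [-π,π]} E[|X_s|^κ], where X_{τ-} denotes the left limit of the path at τ. -/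
open Real MeasureTheory Filter ProbabilityTheory Set
open scoped ENNReal Topology

/-! Let `τₙ` be the largest point of the grid `ℤ / (n + 1)` strictly below `τ` (clipped at `-π`).
It takes countably many values and is a function of `τ`, hence independent of `X`, so splitting
according to its value gives `E g(X_{τₙ}) = ∑ₘ P(τₙ = tₘ) E g(X_{tₘ}) ≤ sup_s E g(X_s)`.
As `τₙ ↑ τ` strictly, `X_{τₙ} → X_{τ-}`, and Fatou's lemma, for `g = |·|^κ` or any lower
semicontinuous `g`, carries the bound over to `E g(X_{τ-})`. -/

section IndexedFamily

variable {Ω ι : Type*} {F : Ω → ι} {Y : ι → Ω → ℝ≥0∞}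

theorem tsum_indicator_fiber (F : Ω → ι) (Y : ι → Ω → ℝ≥0∞) (ω : Ω) :
    ∑' i, (F ⁻¹' {i}).indicator (Y i) ω = Y (F ω) ω := by
  rw [tsum_eq_single (f := fun i => (F ⁻¹' {i}).indicator (Y i) ω) (F ω)
    fun i hi => indicator_of_notMem (s := F ⁻¹' {i}) (fun h => hi h.symm) (Y i)]
  exact indicator_of_mem (s := F ⁻¹' {F ω}) rfl (Y (F ω))

theorem measurable_indicator_fiber [MeasurableSpace ι] [MeasurableSingletonClass ι]
    [MeasurableSpace Ω] (hF : Measurable F)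
    (hY : ∀ ω, Measurable (Y (F ω))) (i : ι) : Measurable ((F ⁻¹' {i}).indicator (Y i)) := by
  by_cases hi : i ∈ range F
  · obtain ⟨ω, rfl⟩ := hi
    exact (hY ω).indicator (hF (measurableSet_singleton _))
  · rw [preimage_singleton_eq_empty.2 hi, indicator_empty]
    exact measurable_const

theorem measurable_apply_index [MeasurableSpace ι] [MeasurableSingletonClass ι]
    [Countable ι] [MeasurableSpace Ω] (hF : Measurable F)
    (hY : ∀ ω, Measurable (Y (F ω))) : Measurable fun ω => Y (F ω) ω := by
  simp_rw [← tsum_indicator_fiber F Y]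
  exact Measurable.tsum (measurable_indicator_fiber hF hY)

theorem lintegral_apply_index_le_of_indep [MeasurableSpace ι] [MeasurableSingletonClass ι]
    [Countable ι] {m₁ m₂ : MeasurableSpace Ω} [mΩ : MeasurableSpace Ω]
    {P : Measure Ω} [IsProbabilityMeasure P] {S : ℝ≥0∞}
    (hm₁ : m₁ ≤ mΩ) (hm₂ : m₂ ≤ mΩ) (hindep : Indep m₁ m₂ P) (hF : Measurable[m₁] F)
    (hY : ∀ ω, Measurable[m₂] (Y (F ω))) (hS : ∀ ω, ∫⁻ ω', Y (F ω) ω' ∂P ≤ S) :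
    ∫⁻ ω, Y (F ω) ω ∂P ≤ S := by
  have hfib : ∀ i, MeasurableSet[m₁] (F ⁻¹' {i}) := fun i => hF (measurableSet_singleton i)
  have hterm : ∀ i, ∫⁻ ω, (F ⁻¹' {i}).indicator (Y i) ω ∂P ≤ P (F ⁻¹' {i}) * S := by
    intro i
    by_cases hi : i ∈ range F
    · obtain ⟨ω₀, rfl⟩ := hi
      have hsplit : ∀ ω, (F ⁻¹' {F ω₀}).indicator (Y (F ω₀)) ω
          = (F ⁻¹' {F ω₀}).indicator 1 ω * Y (F ω₀) ω := by
        intro ω; by_cases hω : ω ∈ F ⁻¹' {F ω₀} <;> simp [hω]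
      simp_rw [hsplit]
      rw [lintegral_mul_eq_lintegral_mul_lintegral_of_independent_measurableSpace hm₁ hm₂
        hindep ((@measurable_one ℝ≥0∞ Ω _ m₁ _).indicator (hfib _)) (hY ω₀),
        lintegral_indicator_one (hm₁ _ (hfib _))]
      exact mul_le_mul_right (hS ω₀) _
    · simp [preimage_singleton_eq_empty.2 hi]
  calc ∫⁻ ω, Y (F ω) ω ∂P = ∑' i, ∫⁻ ω, (F ⁻¹' {i}).indicator (Y i) ω ∂P := by
        simp_rw [← tsum_indicator_fiber F Y]
        exact lintegral_tsum fun i => (measurable_indicator_fiber (hF.mono hm₁ le_rfl)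
          (fun ω => (hY ω).mono hm₂ le_rfl) i).aemeasurable
    _ ≤ ∑' i, P (F ⁻¹' {i}) * S := ENNReal.tsum_le_tsum hterm
    _ = S := by
      rw [ENNReal.tsum_mul_right, ← measure_iUnion (pairwise_disjoint_fiber F)
        fun i => hm₁ _ (hfib i), ← preimage_iUnion, iUnion_of_singleton, preimage_univ,
        measure_univ, one_mul]

end IndexedFamily

section Grid

noncomputable def gridPoint (a : ℝ) (n : ℕ) (m : ℤ) : ℝ := max a ((m - 1) / (n + 1))

noncomputable def gridBelow (a : ℝ) (n : ℕ) (t : ℝ) : ℝ := gridPoint a n ⌈t * (n + 1)⌉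

variable {a t : ℝ}

theorem gridBelow_mem_Ico (h : a < t) (n : ℕ) : gridBelow a n t ∈ Ico a t := by
  refine ⟨le_max_left _ _, max_lt h ?_⟩
  rw [div_lt_iff₀ (by positivity)]
  linarith [Int.ceil_lt_add_one (t * (n + 1))]

theorem sub_one_div_le_gridBelow (a t : ℝ) (n : ℕ) : t - 1 / (n + 1) ≤ gridBelow a n t := by
  refine le_max_of_le_right ?_
  rw [le_div_iff₀ (by positivity), sub_mul, one_div_mul_cancel (by positivity)]
  linarith [Int.le_ceil (t * (n + 1))]

theorem tendsto_gridBelow (h : a < t) :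
    Tendsto (fun n : ℕ => gridBelow a n t) atTop (𝓝[<] t) := by
  refine tendsto_nhdsWithin_of_tendsto_nhds_of_eventually_within _ ?_
    (Eventually.of_forall fun n => (gridBelow_mem_Ico h n).2)
  have hlower : Tendsto (fun n : ℕ => t - 1 / ((n : ℝ) + 1)) atTop (𝓝 t) := by
    simpa using (tendsto_const_nhds (x := t)).sub tendsto_one_div_add_atTop_nhds_zero_nat
  exact tendsto_of_tendsto_of_tendsto_of_le_of_le hlower tendsto_const_nhds
    (sub_one_div_le_gridBelow a t) fun n => (gridBelow_mem_Ico h n).2.le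

end Grid

theorem lintegral_comp_leftLim_le_iSup_of_indep {Ω : Type*} {m₂ : MeasurableSpace Ω}
    [mΩ : MeasurableSpace Ω] {P : Measure Ω} [IsProbabilityMeasure P] {a b : ℝ} {g : ℝ → ℝ≥0∞}
    (hg : LowerSemicontinuous g) {X : ℝ → Ω → ℝ} {L : Ω → ℝ} {τ : Ω → ℝ}
    (hX : ∀ s ∈ Icc a b, Measurable[m₂] (X s)) (hm₂ : m₂ ≤ mΩ)
    (hτ : Measurable τ) (hτab : ∀ ω, τ ω ∈ Ioc a b)
    (hL : ∀ ω, Tendsto (fun s => X s ω) (𝓝[<] (τ ω)) (𝓝 (L ω)))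
    (hindep : Indep (MeasurableSpace.comap τ inferInstance) m₂ P) :
    ∫⁻ ω, g (L ω) ∂P ≤ ⨆ s ∈ Icc a b, ∫⁻ ω, g (X s ω) ∂P := by
  set S := ⨆ s ∈ Icc a b, ∫⁻ ω, g (X s ω) ∂P
  have hgrid : ∀ n ω, gridBelow a n (τ ω) ∈ Icc a b := fun n ω =>
    Ico_subset_Icc_self (Ico_subset_Ico_right (hτab ω).2 (gridBelow_mem_Ico (hτab ω).1 n))
  have hY : ∀ n ω, Measurable[m₂] fun ω' => g (X (gridBelow a n (τ ω)) ω') := fun n ω =>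
    hg.measurable.comp (hX _ (hgrid n ω))
  have hceil : ∀ n : ℕ, Measurable[MeasurableSpace.comap τ inferInstance]
      fun ω => ⌈τ ω * (n + 1)⌉ := fun n =>
    (measurable_id.mul_const _).ceil.comp (comap_measurable τ)
  have hbound : ∀ n, ∫⁻ ω, g (X (gridBelow a n (τ ω)) ω) ∂P ≤ S := fun n =>
    lintegral_apply_index_le_of_indep (Y := fun m ω => g (X (gridPoint a n m) ω)) hτ.comap_le hm₂
      hindep (hceil n) (hY n) fun ω => le_iSup₂_of_le _ (hgrid n ω) le_rfl
  have hmeas : ∀ n, Measurable fun ω => g (X (gridBelow a n (τ ω)) ω) := fun n =>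
    measurable_apply_index (Y := fun m ω => g (X (gridPoint a n m) ω))
      ((hceil n).mono hτ.comap_le le_rfl) fun ω => (hY n ω).mono hm₂ le_rfl
  have hpointwise : ∀ ω, g (L ω) ≤ liminf (fun n => g (X (gridBelow a n (τ ω)) ω)) atTop :=
    fun ω => (lowerSemicontinuous_iff_le_liminf.1 hg (L ω)).trans
      ((hL ω).comp (tendsto_gridBelow (hτab ω).1)).liminf_le_liminf_comp
  calc ∫⁻ ω, g (L ω) ∂P
      ≤ ∫⁻ ω, liminf (fun n => g (X (gridBelow a n (τ ω)) ω)) atTop ∂P :=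
        lintegral_mono hpointwise
    _ ≤ liminf (fun n => ∫⁻ ω, g (X (gridBelow a n (τ ω)) ω) ∂P) atTop :=
        lintegral_liminf_le hmeas
    _ ≤ S := liminf_le_of_frequently_le' (Frequently.of_forall hbound)

theorem stmt7_general {Ω : Type*} [MeasurableSpace Ω] (P : Measure Ω) [IsProbabilityMeasure P]
    (X : ℝ → Ω → ℝ) (hXm : ∀ s, Measurable (X s))
    (Xminus : ℝ → Ω → ℝ)
    (hll : ∀ ω, ∀ t ∈ Set.Ioc (-π) π,
      Tendsto (fun s => X s ω) (nhdsWithin t (Set.Iio t)) (nhds (Xminus t ω)))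
    (τ : Ω → ℝ) (hτm : Measurable τ) (hτ : ∀ ω, τ ω ∈ Set.Ioc (-π) π)
    (hindep : ProbabilityTheory.Indep (MeasurableSpace.comap τ inferInstance)
      (⨆ s ∈ Set.Icc (-π) π, MeasurableSpace.comap (X s) inferInstance) P)
    (κ : ℝ) (hκ : 1 < κ) :
    (∫⁻ ω, ENNReal.ofReal (|Xminus (τ ω) ω| ^ κ) ∂P) ≤
      ⨆ s ∈ Set.Icc (-π) π, ∫⁻ ω, ENNReal.ofReal (|X s ω| ^ κ) ∂P := by
  have hg : Continuous fun x : ℝ => ENNReal.ofReal (|x| ^ κ) :=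
    ENNReal.continuous_ofReal.comp (continuous_abs.rpow_const fun _ => Or.inr (by linarith))
  exact lintegral_comp_leftLim_le_iSup_of_indep (L := fun ω => Xminus (τ ω) ω)
    hg.lowerSemicontinuous
    (fun s hs => Measurable.of_comap_le (le_iSup₂ (f := fun s (_ : s ∈ Icc (-π) π) =>
      MeasurableSpace.comap (X s) inferInstance) s hs))
    (iSup₂_le fun s _ => (hXm s).comap_le) hτm hτ (fun ω => hll ω _ (hτ ω)) hindep

theorem stmt7 {Ω : Type*} [MeasurableSpace Ω] (P : Measure Ω) [IsProbabilityMeasure P]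
    (X : ℝ → Ω → ℝ) (hXm : ∀ s, Measurable (X s))
    (hrc : ∀ ω, ∀ t ∈ Set.Icc (-π) π,
      ContinuousWithinAt (fun s => X s ω) (Set.Ici t) t)
    (Xminus : ℝ → Ω → ℝ)
    (hll : ∀ ω, ∀ t ∈ Set.Ioc (-π) π,
      Tendsto (fun s => X s ω) (nhdsWithin t (Set.Iio t)) (nhds (Xminus t ω)))
    (τ : Ω → ℝ) (hτm : Measurable τ) (hτ : ∀ ω, τ ω ∈ Set.Ioc (-π) π)
    (hindep : ProbabilityTheory.Indep (MeasurableSpace.comap τ inferInstance)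
      (⨆ s ∈ Set.Icc (-π) π, MeasurableSpace.comap (X s) inferInstance) P)
    (κ : ℝ) (hκ : 1 < κ) :
    (∫⁻ ω, ENNReal.ofReal (|Xminus (τ ω) ω| ^ κ) ∂P) ≤
      ⨆ s ∈ Set.Icc (-π) π, ∫⁻ ω, ENNReal.ofReal (|X s ω| ^ κ) ∂P :=
  stmt7_general P X hXm Xminus hll τ hτm hτ hindep κ hκ
end
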